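/- For every integer d ≥ 2 there exist a finite set Λ_U of vectors ξ ∈ ℚ^d with |ξ| = 1, for each ξ ∈ Λ_U an orthonormal basis (ξ, ξ₁, …, ξ_{d−1}) of ℝ^d, constants ε₀ > 0 and C ≥ 1, and for each ξ ∈ Λ_U a smooth function Γ_ξ : B_{ε₀}(Id) → ℝ, where B_{ε₀}(Id) is the open ball of radius ε₀ centered at the identity matrix in the space of real symmetric d×d matrices, such that for every symmetric d×d matrix S with |S − Id| < ε₀ one has the identity S = Σ_{ξ∈Λ_U} Γ_ξ(S)² ξ₁⊗ξ₁, and moreover C^{−1} ≤ Γ_ξ(S) ≤ C for all such S and every ξ ∈ Λ_U. -/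

import Mathlib

open Real

open Finset RealInnerProductSpace

namespace GeomVel

variable (d : ℕ)

/-- standard basis vector -/
def std (k : Fin d) : Fin d → ℝ := fun i => if i = k then 1 else 0

/-- vector supported on two coordinates -/
def plane (s t : Fin d) (a b : ℚ) : Fin d → ℝ :=
  fun i => if i = s then (a : ℝ) else if i = t then (b : ℝ) else 0

def pv : Fin 4 → ℚ × ℚ := ![(3/5, 4/5), (4/5, 3/5), (3/5, -4/5), (4/5, -3/5)]
def px : Fin 4 → ℚ × ℚ := ![(4/5, -3/5), (3/5, -4/5), (4/5, 3/5), (3/5, 4/5)]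
def sgn : Fin 4 → ℝ := ![1, 1, -1, -1]

abbrev PairIdx := {p : Fin d × Fin d // p.1 < p.2}
abbrev I := Fin d ⊕ (PairIdx d × Fin 4)

def nxt (k : Fin d) : Fin d := ⟨(k.val + 1) % d, Nat.mod_lt _ k.pos⟩

lemma nxt_cases (k : Fin d) : (nxt d k).val = k.val + 1 ∨ ((nxt d k).val = 0 ∧ k.val + 1 = d) := by
  rcases eq_or_lt_of_le (Nat.succ_le_of_lt k.isLt) with h | h
  · right; simp [nxt, ← h, Nat.mod_self]
  · left; simp [nxt, Nat.mod_eq_of_lt h]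

lemma nxt_ne (hd : 2 ≤ d) (k : Fin d) : nxt d k ≠ k := by
  intro h
  rcases nxt_cases d k with h1 | ⟨h1, h2⟩ <;> rw [Fin.ext_iff] at h <;> omega

lemma nxt_inj : Function.Injective (nxt d) := by
  intro a b h
  rw [Fin.ext_iff] at h ⊢
  have ha := a.isLt; have hb := b.isLt
  rcases nxt_cases d a with h1 | ⟨h1, h2⟩ <;> rcases nxt_cases d b with h3 | ⟨h3, h4⟩ <;> omega

def vI : I d → Fin d → ℝ
  | .inl k => std d k
  | .inr q => plane d q.1.1.1 q.1.1.2 (pv q.2).1 (pv q.2).2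

def xiI : I d → Fin d → ℝ
  | .inl k => std d (nxt d k)
  | .inr q => plane d q.1.1.1 q.1.1.2 (px q.2).1 (px q.2).2

noncomputable def K : ℝ := 1 / (4 * d)
noncomputable def eps : ℝ := 1 / (8 * d)

/-- coefficient of an off-diagonal index -/
noncomputable def cfr (q : PairIdx d × Fin 4) (S : Fin d → Fin d → ℝ) : ℝ :=
  K d + sgn q.2 * (25/48) * S q.1.1.1 q.1.1.2

noncomputable def cf (S : Fin d → Fin d → ℝ) : I d → ℝ
  | .inr q => cfr d q S
  | .inl k => S k k - ∑ q : PairIdx d × Fin 4, cfr d q S * (vI d (.inr q) k)^2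

lemma sum_std_mul (k : Fin d) (g : Fin d → ℝ) : ∑ i, std d k i * g i = g k := by
  rw [Finset.sum_congr rfl (g := fun i => if i = k then g i else 0)
    (fun i _ => by simp only [std]; split_ifs <;> simp)]
  simp

lemma sum_two (s t : Fin d) (hst : s ≠ t) (A B : ℝ) :
    ∑ i, (if i = s then A else if i = t then B else 0) = A + B := by
  rw [Finset.sum_congr rfl (g := fun i => (if i = s then A else 0) + (if i = t then B else 0))
    (fun i _ => by split_ifs with h1 h2 <;> simp_all)]
  rw [Finset.sum_add_distrib]
  simp

lemma plane_mul (s t : Fin d) (a b a' b' : ℚ) (i : Fin d) :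
    plane d s t a b i * plane d s t a' b' i =
      if i = s then (a : ℝ) * a' else if i = t then (b : ℝ) * b' else 0 := by
  simp only [plane]; split_ifs <;> ring

lemma sum_plane_mul (s t : Fin d) (hst : s ≠ t) (a b a' b' : ℚ) :
    ∑ i, plane d s t a b i * plane d s t a' b' i = (a : ℝ) * a' + (b : ℝ) * b' := by
  rw [Finset.sum_congr rfl fun i _ => plane_mul d s t a b a' b' i, sum_two d s t hst]

lemma sum_sq_std (k : Fin d) : ∑ i, std d k i ^ 2 = 1 := by
  have h : ∑ i, std d k i ^ 2 = ∑ i, std d k i * std d k i :=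
    Finset.sum_congr rfl fun i _ => pow_two _
  rw [h, sum_std_mul]; simp [std]

lemma px_sq (m : Fin 4) : ((px m).1 : ℝ) * (px m).1 + ((px m).2 : ℝ) * (px m).2 = 1 := by
  fin_cases m <;> norm_num [px]

lemma pv_sq (m : Fin 4) : ((pv m).1 : ℝ) * (pv m).1 + ((pv m).2 : ℝ) * (pv m).2 = 1 := by
  fin_cases m <;> norm_num [pv]

lemma px_pv_orth (m : Fin 4) :
    ((px m).1 : ℝ) * (pv m).1 + ((px m).2 : ℝ) * (pv m).2 = 0 := by
  fin_cases m <;> norm_num [px, pv]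

lemma px1_ne0 (m : Fin 4) : ((px m).1 : ℝ) ≠ 0 := by fin_cases m <;> norm_num [px]
lemma px1_ne1 (m : Fin 4) : ((px m).1 : ℝ) ≠ 1 := by fin_cases m <;> norm_num [px]
lemma px2_ne0 (m : Fin 4) : ((px m).2 : ℝ) ≠ 0 := by fin_cases m <;> norm_num [px]
lemma px_inj (m m' : Fin 4) (h1 : ((px m).1 : ℝ) = (px m').1)
    (h2 : ((px m).2 : ℝ) = (px m').2) : m = m' := by
  fin_cases m <;> fin_cases m' <;> first | rfl | (revert h1 h2; norm_num [px])

lemma plane_self (s t : Fin d) (a b : ℚ) : plane d s t a b s = a := by simp [plane]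

lemma plane_snd (s t : Fin d) (a b : ℚ) (h : t ≠ s) : plane d s t a b t = b := by
  simp [plane, h]

lemma plane_other (s t : Fin d) (a b : ℚ) {i : Fin d} (h1 : i ≠ s) (h2 : i ≠ t) :
    plane d s t a b i = 0 := by simp [plane, h1, h2]

lemma sum_sq_xi (idx : I d) : ∑ i, xiI d idx i ^ 2 = 1 := by
  cases idx with
  | inl k => exact sum_sq_std d _
  | inr q =>
    have h : ∑ i, xiI d (.inr q) i ^ 2 = ∑ i, xiI d (.inr q) i * xiI d (.inr q) i :=
      Finset.sum_congr rfl fun i _ => pow_two _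
    rw [h]
    show ∑ i, plane d _ _ _ _ i * plane d _ _ _ _ i = 1
    rw [sum_plane_mul d _ _ q.1.2.ne _ _ _ _, px_sq]

lemma sum_sq_v (idx : I d) : ∑ i, vI d idx i ^ 2 = 1 := by
  cases idx with
  | inl k => exact sum_sq_std d _
  | inr q =>
    have h : ∑ i, vI d (.inr q) i ^ 2 = ∑ i, vI d (.inr q) i * vI d (.inr q) i :=
      Finset.sum_congr rfl fun i _ => pow_two _
    rw [h]
    show ∑ i, plane d _ _ _ _ i * plane d _ _ _ _ i = 1
    rw [sum_plane_mul d _ _ q.1.2.ne _ _ _ _, pv_sq]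

lemma xi_dot_v (hd : 2 ≤ d) (idx : I d) : ∑ i, xiI d idx i * vI d idx i = 0 := by
  cases idx with
  | inl k =>
    show ∑ i, std d (nxt d k) i * std d k i = 0
    rw [sum_std_mul]
    simp [std, nxt_ne d hd k]
  | inr q =>
    show ∑ i, plane d _ _ _ _ i * plane d _ _ _ _ i = 0
    rw [sum_plane_mul d _ _ q.1.2.ne _ _ _ _, px_pv_orth]

lemma std_ne_plane (k s t : Fin d) (hst : s < t) (m : Fin 4) :
    std d k ≠ plane d s t (px m).1 (px m).2 := by
  intro h
  have := congrFun h s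
  simp only [std, plane, if_pos rfl] at this
  split_ifs at this
  · exact px1_ne1 m this.symm
  · exact px1_ne0 m this.symm

lemma xiI_inj (hd : 2 ≤ d) : Function.Injective (xiI d) := by
  intro x y h
  cases x with
  | inl a =>
    cases y with
    | inl b =>
      have hab := congrFun h (nxt d a)
      simp only [xiI, std] at hab
      simp only [if_true] at hab
      split_ifs at hab with hh
      · exact congrArg Sum.inl (nxt_inj d hh)
      · norm_num at hab
    | inr q => exact absurd h (std_ne_plane d _ _ _ q.1.2 q.2)
  | inr q =>
    cases y with
    | inl b => exact absurd h.symm (std_ne_plane d _ _ _ q.1.2 q.2)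
    | inr q' =>
      obtain ⟨⟨⟨s, t⟩, hst⟩, m⟩ := q
      obtain ⟨⟨⟨s', t'⟩, hst'⟩, m'⟩ := q'
      simp only at hst hst'
      replace h : plane d s t (px m).1 (px m).2 = plane d s' t' (px m').1 (px m').2 := h
      have hs : s = s' := by
        by_contra hne
        by_cases hA : s = t'
        · by_cases hB : s' = t
          · have c1 : s < s' := hB ▸ hst
            have c2 : s' < s := hA ▸ hst'
            exact absurd c2 (lt_asymm c1)
          · have e2 := congrFun h s'
            rw [plane_self] at e2
            rw [plane_other d s t _ _ (Ne.symm hne) hB] at e2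
            exact px1_ne0 m' e2.symm
        · have e1 := congrFun h s
          rw [plane_self, plane_other d s' t' _ _ hne hA] at e1
          exact px1_ne0 m e1
      subst hs
      have ht : t = t' := by
        by_contra hne
        have e2 := congrFun h t
        rw [plane_snd d s t _ _ hst.ne', plane_other d s t' _ _ hst.ne' hne] at e2
        exact px2_ne0 m e2
      subst ht
      have ha := congrFun h s
      rw [plane_self, plane_self] at ha
      have hb := congrFun h t
      rw [plane_snd d s t _ _ hst.ne', plane_snd d s t _ _ hst.ne'] at hb
      have hm : m = m' := px_inj m m' ha hb
      subst hm; rfl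

lemma sum_mul_self_xi (idx : I d) : ∑ i, xiI d idx i * xiI d idx i = 1 := by
  rw [Finset.sum_congr rfl fun i _ => (pow_two (xiI d idx i)).symm, sum_sq_xi]

lemma sum_mul_self_v (idx : I d) : ∑ i, vI d idx i * vI d idx i = 1 := by
  rw [Finset.sum_congr rfl fun i _ => (pow_two (vI d idx i)).symm, sum_sq_v]

lemma inner_euc (x y : EuclideanSpace ℝ (Fin d)) : ⟪x, y⟫ = ∑ i, x i * y i := by
  rw [PiLp.inner_apply]
  simp [RCLike.inner_apply, starRingEnd_apply, star_trivial, mul_comm]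

lemma exists_basis (hd : 2 ≤ d) (idx : I d) :
    ∃ b : Fin d → Fin d → ℝ,
      b ⟨0, Nat.lt_of_lt_of_le Nat.two_pos hd⟩ = xiI d idx ∧
        b ⟨1, Nat.lt_of_lt_of_le Nat.one_lt_two hd⟩ = vI d idx ∧
      ∀ k l, ∑ i, b k i * b l i = if k = l then (1 : ℝ) else 0 := by
  classical
  have h0 : (0 : ℕ) < d := by omega
  have h1 : (1 : ℕ) < d := by omega
  set z0 : Fin d := ⟨0, h0⟩ with hz0
  set z1 : Fin d := ⟨1, h1⟩ with hz1
  have hz : z0 ≠ z1 := by simp [hz0, hz1, Fin.ext_iff]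
  let w : Fin d → EuclideanSpace ℝ (Fin d) := fun k => if k = z0 then WithLp.toLp 2 (xiI d idx) else WithLp.toLp 2 (vI d idx)
  have horth : Orthonormal ℝ (({z0, z1} : Set (Fin d)).restrict w) := by
    rw [orthonormal_iff_ite]
    rintro ⟨i, hi⟩ ⟨j, hj⟩
    simp only [Set.restrict_apply, Subtype.mk.injEq]
    rw [inner_euc]
    simp only [Set.mem_insert_iff, Set.mem_singleton_iff] at hi hj
    rcases hi with rfl | rfl <;> rcases hj with rfl | rfl
    · simp only [w, if_pos rfl, WithLp.ofLp_toLp, Set.restrict_apply]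
      exact sum_mul_self_xi d idx
    · simp only [w, if_pos rfl, if_neg (Ne.symm hz), WithLp.ofLp_toLp, Set.restrict_apply]
      exact xi_dot_v d hd idx
    · simp only [w, if_pos rfl, if_neg (Ne.symm hz), WithLp.ofLp_toLp, Set.restrict_apply]
      show ∑ i, vI d idx i * xiI d idx i = 0
      rw [Finset.sum_congr rfl fun i _ => mul_comm (vI d idx i) (xiI d idx i),
        xi_dot_v d hd idx]
    · simp only [w, if_neg (Ne.symm hz), WithLp.ofLp_toLp, Set.restrict_apply]
      exact sum_mul_self_v d idx
  obtain ⟨b, hb⟩ := horth.exists_orthonormalBasis_extension_of_card_eq (by simp)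
  refine ⟨fun k i => b k i, ?_, ?_, ?_⟩
  · have h : b z0 = w z0 := hb z0 (by simp)
    rw [show w z0 = WithLp.toLp 2 (xiI d idx) from if_pos rfl] at h
    exact funext fun i => congrArg (fun v : EuclideanSpace ℝ (Fin d) => WithLp.ofLp v i) h
  · have h : b z1 = w z1 := hb z1 (by simp)
    rw [show w z1 = WithLp.toLp 2 (vI d idx) from if_neg hz.symm] at h
    exact funext fun i => congrArg (fun v : EuclideanSpace ℝ (Fin d) => WithLp.ofLp v i) h
  · intro k l
    have h := b.orthonormal
    rw [orthonormal_iff_ite] at h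
    have h2 := h k l
    rw [inner_euc] at h2
    exact h2

noncomputable def bas (hd : 2 ≤ d) (idx : I d) : Fin d → Fin d → ℝ :=
  (exists_basis d hd idx).choose

lemma bas_zero (hd : 2 ≤ d) (idx : I d) (h0 : 0 < d) :
    bas d hd idx ⟨0, h0⟩ = xiI d idx := (exists_basis d hd idx).choose_spec.1

lemma bas_one (hd : 2 ≤ d) (idx : I d) (h1 : 1 < d) :
    bas d hd idx ⟨1, h1⟩ = vI d idx := (exists_basis d hd idx).choose_spec.2.1

lemma bas_orth (hd : 2 ≤ d) (idx : I d) :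
    ∀ k l, ∑ i, bas d hd idx k i * bas d hd idx l i = if k = l then (1 : ℝ) else 0 :=
  (exists_basis d hd idx).choose_spec.2.2

noncomputable def eV (hd : 2 ≤ d) : (Fin d → ℝ) → Fin d → Fin d → ℝ :=
  fun x => if h : ∃ idx, xiI d idx = x then bas d hd h.choose else fun _ _ => 0

noncomputable def Gam : (Fin d → ℝ) → (Fin d → Fin d → ℝ) → ℝ :=
  fun x S => if h : ∃ idx, xiI d idx = x then Real.sqrt (cf d S h.choose) else 1

lemma eV_eq (hd : 2 ≤ d) (idx : I d) : eV d hd (xiI d idx) = bas d hd idx := by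
  have hex : ∃ j, xiI d j = xiI d idx := ⟨idx, rfl⟩
  rw [eV, dif_pos hex]
  exact congrArg (bas d hd) (xiI_inj d hd hex.choose_spec)

lemma Gam_eq (hd : 2 ≤ d) (idx : I d) (S : Fin d → Fin d → ℝ) :
    Gam d (xiI d idx) S = Real.sqrt (cf d S idx) := by
  have hex : ∃ j, xiI d j = xiI d idx := ⟨idx, rfl⟩
  rw [Gam, dif_pos hex]
  exact congrArg (fun j => Real.sqrt (cf d S j)) (xiI_inj d hd hex.choose_spec)

lemma sgn_cases (m : Fin 4) : sgn m = 1 ∨ sgn m = -1 := by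
  fin_cases m <;> simp [sgn]

lemma indicator_sum_le (k : Fin d) :
    ∑ p : PairIdx d, ((if k = (p : Fin d × Fin d).1 then (1:ℝ) else 0) +
      (if k = (p : Fin d × Fin d).2 then 1 else 0)) ≤ d := by
  classical
  rw [← Finset.sum_subtype (Finset.univ.filter fun p : Fin d × Fin d => p.1 < p.2) (by simp)
      (fun p => (if k = p.1 then (1:ℝ) else 0) + (if k = p.2 then 1 else 0))]
  rw [Finset.sum_filter, Fintype.sum_prod_type]
  have key : ∀ s t : Fin d, (if s < t then ((if k = s then (1:ℝ) else 0) + (if k = t then 1 else 0)) else 0)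
      = (if k = s ∧ s < t then (1:ℝ) else 0) + (if k = t ∧ s < t then 1 else 0) := by
    intro s t
    by_cases h : s < t <;> by_cases h1 : k = s <;> by_cases h2 : k = t <;> simp [h, h1, h2]
  rw [Finset.sum_congr rfl fun s _ => Finset.sum_congr rfl fun t _ => key s t]
  rw [Finset.sum_congr rfl fun s (_ : s ∈ Finset.univ) => Finset.sum_add_distrib]
  rw [Finset.sum_add_distrib]
  have hA : ∀ s : Fin d, (∑ t, if k = s ∧ s < t then (1:ℝ) else 0)
      = if k = s then (∑ t, if k < t then (1:ℝ) else 0) else 0 := by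
    intro s
    by_cases h : k = s
    · subst h; simp
    · simp [h]
  have hB : (∑ s, ∑ t, if k = t ∧ s < t then (1:ℝ) else 0)
      = ∑ t, if t = k then (∑ s, if s < k then (1:ℝ) else 0) else 0 := by
    rw [Finset.sum_comm]
    refine Finset.sum_congr rfl fun t _ => ?_
    by_cases h : t = k
    · subst h; simp [eq_comm]
    · have h' : ¬(k = t) := fun hh => h hh.symm
      simp [h, h']
  rw [Finset.sum_congr rfl fun s _ => hA s, hB, Finset.sum_ite_eq Finset.univ k,
    Finset.sum_ite_eq' Finset.univ k]
  simp only [Finset.mem_univ, if_true]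
  have : ∀ x : Fin d, ((if k < x then (1:ℝ) else 0) + (if x < k then 1 else 0)) ≤ 1 := by
    intro x
    rcases lt_trichotomy k x with h | h | h
    · simp [h, asymm h]
    · simp [h, lt_irrefl]
    · simp [h, asymm h]
  calc (∑ t, if k < t then (1:ℝ) else 0) + (∑ s, if s < k then (1:ℝ) else 0)
      = ∑ x : Fin d, ((if k < x then (1:ℝ) else 0) + (if x < k then 1 else 0)) := by
        rw [Finset.sum_add_distrib]
    _ ≤ ∑ _x : Fin d, (1:ℝ) := Finset.sum_le_sum fun x _ => this x
    _ = d := by simp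

lemma sum_vsq_le (k : Fin d) :
    ∑ q : PairIdx d × Fin 4, (vI d (.inr q) k)^2 ≤ 2 * d := by
  rw [Fintype.sum_prod_type]
  have hp : ∀ p : PairIdx d, (∑ m, (vI d (.inr (p, m)) k)^2) ≤
      2 * ((if k = (p : Fin d × Fin d).1 then (1:ℝ) else 0) +
        (if k = (p : Fin d × Fin d).2 then 1 else 0)) := by
    rintro ⟨⟨s, t⟩, hst⟩
    simp only at hst ⊢
    by_cases h1 : k = s
    · subst h1
      rw [Fin.sum_univ_four]
      simp only [vI, plane_self, if_pos rfl]
      have hb : (0:ℝ) ≤ if k = t then (1:ℝ) else 0 := by positivity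
      norm_num [pv, Matrix.cons_val_two, Matrix.cons_val_three]
      nlinarith [hb]
    · by_cases h2 : k = t
      · subst h2
        rw [Fin.sum_univ_four]
        simp only [vI, plane_snd d s _ _ _ hst.ne', if_neg h1, if_pos rfl]
        norm_num [pv, Matrix.cons_val_two, Matrix.cons_val_three]
      · rw [Fin.sum_univ_four]
        simp only [vI, plane_other d s t _ _ h1 h2, if_neg h1, if_neg h2]
        norm_num
  calc ∑ p : PairIdx d, ∑ m, (vI d (.inr (p, m)) k)^2
      ≤ ∑ p : PairIdx d, 2 * ((if k = (p : Fin d × Fin d).1 then (1:ℝ) else 0) +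
          (if k = (p : Fin d × Fin d).2 then 1 else 0)) := Finset.sum_le_sum fun p _ => hp p
    _ = 2 * ∑ p : PairIdx d, ((if k = (p : Fin d × Fin d).1 then (1:ℝ) else 0) +
          (if k = (p : Fin d × Fin d).2 then 1 else 0)) := by rw [Finset.mul_sum]
    _ ≤ 2 * d := by
        have := indicator_sum_le d k
        linarith

lemma cfr_bounds (hd : 2 ≤ d) {S : Fin d → Fin d → ℝ}
    (hS : ∀ i j, |S i j - (if i = j then (1:ℝ) else 0)| ≤ eps d)
    (q : PairIdx d × Fin 4) : K d / 2 ≤ cfr d q S ∧ cfr d q S ≤ 3 * K d / 2 := by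
  have hd2 : (2:ℝ) ≤ (d:ℝ) := by exact_mod_cast hd
  have hdpos : (0:ℝ) < d := by linarith
  have hKpos : 0 < K d := by rw [K]; positivity
  have hepsK : eps d = K d / 2 := by rw [K, eps]; ring
  have habs : |S q.1.1.1 q.1.1.2| ≤ K d / 2 := by
    have h := hS q.1.1.1 q.1.1.2
    rw [if_neg q.1.2.ne, sub_zero] at h
    linarith [hepsK ▸ h]
  obtain ⟨hL, hU⟩ := abs_le.mp habs
  rcases sgn_cases q.2 with h | h <;> rw [cfr, h] <;> constructor <;> nlinarith [hKpos]

lemma cf_lb (hd : 2 ≤ d) {S : Fin d → Fin d → ℝ}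
    (hS : ∀ i j, |S i j - (if i = j then (1:ℝ) else 0)| ≤ eps d) (idx : I d) :
    1/(8*(d:ℝ)) ≤ cf d S idx ∧ cf d S idx ≤ 2 := by
  have hd2 : (2:ℝ) ≤ (d:ℝ) := by exact_mod_cast hd
  have hdpos : (0:ℝ) < d := by linarith
  have hKpos : 0 < K d := by rw [K]; positivity
  have hK8 : K d ≤ 1/8 := by
    rw [K, div_le_div_iff₀ (by linarith) (by norm_num)]; linarith
  have h8d : 1/(8*(d:ℝ)) ≤ 1/16 := by
    rw [div_le_div_iff₀ (by linarith) (by norm_num)]; linarith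
  have hepsK : eps d = K d / 2 := by rw [K, eps]; ring
  have heps16 : eps d ≤ 1/16 := by rw [hepsK]; linarith
  have hKd2 : K d / 2 = 1/(8*(d:ℝ)) := by rw [K]; ring
  cases idx with
  | inr q =>
    obtain ⟨h1, h2⟩ := cfr_bounds d hd hS q
    constructor
    · show 1/(8*(d:ℝ)) ≤ cfr d q S
      linarith [hKd2 ▸ h1]
    · show cfr d q S ≤ 2
      linarith
  | inl k =>
    have hSkk : |S k k - 1| ≤ eps d := by
      have h := hS k k; rwa [if_pos rfl] at h
    obtain ⟨hL, hU⟩ := abs_le.mp hSkk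
    set T := ∑ q : PairIdx d × Fin 4, cfr d q S * (vI d (.inr q) k)^2 with hT
    have hcf : cf d S (.inl k) = S k k - T := rfl
    have hT0 : 0 ≤ T := Finset.sum_nonneg fun q _ =>
      mul_nonneg (le_trans (by linarith) (cfr_bounds d hd hS q).1) (sq_nonneg _)
    have hTle : T ≤ 3/4 := by
      have hKdd : K d * d = 1/4 := by rw [K]; field_simp
      calc T ≤ ∑ q : PairIdx d × Fin 4, (3 * K d / 2) * (vI d (.inr q) k)^2 :=
            Finset.sum_le_sum fun q _ =>
              mul_le_mul_of_nonneg_right (cfr_bounds d hd hS q).2 (sq_nonneg _)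
        _ = (3 * K d / 2) * ∑ q : PairIdx d × Fin 4, (vI d (.inr q) k)^2 := by
            rw [Finset.mul_sum]
        _ ≤ (3 * K d / 2) * (2 * d) :=
            mul_le_mul_of_nonneg_left (sum_vsq_le d k) (by positivity)
        _ = 3 * (K d * d) := by ring
        _ = 3/4 := by rw [hKdd]; norm_num
    rw [hcf]
    constructor <;> linarith

lemma cf_inr (S : Fin d → Fin d → ℝ) (q : PairIdx d × Fin 4) :
    cf d S (.inr q) = cfr d q S := rfl

lemma decomp {S : Fin d → Fin d → ℝ} (hsym : ∀ i j, S i j = S j i) (i j : Fin d) :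
    ∑ idx : I d, cf d S idx * (vI d idx i * vI d idx j) = S i j := by
  classical
  rw [Fintype.sum_sum_type]
  have hstd : ∀ k : Fin d, cf d S (.inl k) * (vI d (.inl k) i * vI d (.inl k) j)
      = if k = i then (if k = j then cf d S (.inl k) else 0) else 0 := by
    intro k
    show cf d S (.inl k) * (std d k i * std d k j) = _
    by_cases h1 : k = i
    · subst h1
      by_cases h2 : k = j
      · subst h2; simp [std]
      · simp [std, Ne.symm h2, h2]
    · simp [std, Ne.symm h1, h1]
  rw [Finset.sum_congr rfl fun k _ => hstd k, Finset.sum_ite_eq' Finset.univ i]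
  simp only [Finset.mem_univ, if_true]
  by_cases hij : i = j
  · subst hij
    rw [if_pos rfl]
    have hB : ∑ q : PairIdx d × Fin 4, cf d S (.inr q) * (vI d (.inr q) i * vI d (.inr q) i)
        = ∑ q : PairIdx d × Fin 4, cfr d q S * (vI d (.inr q) i)^2 :=
      Finset.sum_congr rfl fun q _ => by rw [cf_inr, pow_two]
    rw [hB]
    show (S i i - ∑ q : PairIdx d × Fin 4, cfr d q S * (vI d (.inr q) i)^2) + _ = S i i
    ring
  · rw [if_neg hij]
    rw [Fintype.sum_prod_type]
    have hkey : ∀ p : PairIdx d,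
        (∑ m, cf d S (.inr (p, m)) * (vI d (.inr (p, m)) i * vI d (.inr (p, m)) j))
        = if (p : Fin d × Fin d).1 = i ∧ (p : Fin d × Fin d).2 = j then S i j
          else if (p : Fin d × Fin d).1 = j ∧ (p : Fin d × Fin d).2 = i then S i j else 0 := by
      rintro ⟨⟨s, t⟩, hst⟩
      simp only at hst ⊢
      by_cases h1 : s = i
      · subst h1
        by_cases h2 : t = j
        · subst h2
          rw [if_pos ⟨rfl, rfl⟩, Fin.sum_univ_four]
          simp only [cf_inr, cfr, vI, plane_self, plane_snd d _ _ _ _ hst.ne', sgn, pv, Matrix.cons_val_two, Matrix.cons_val_three]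
          norm_num
          ring
        · have hjs : j ≠ s := Ne.symm hij
          have hjt : j ≠ t := Ne.symm h2
          rw [Fin.sum_univ_four]
          simp only [vI, plane_other d _ _ _ _ hjs hjt]
          simp [h2, hij]
      · by_cases h1' : s = j
        · subst h1'
          by_cases h2 : t = i
          · subst h2
            rw [if_neg (fun hh => h1 hh.1), if_pos ⟨rfl, rfl⟩, Fin.sum_univ_four]
            simp only [cf_inr, cfr, vI, plane_self, plane_snd d _ _ _ _ hst.ne', sgn, pv]
            rw [hsym t s]
            norm_num [Matrix.cons_val_two, Matrix.cons_val_three]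
            ring
          · have his : i ≠ s := hij
            have hit : i ≠ t := Ne.symm h2
            rw [Fin.sum_univ_four]
            simp only [vI, plane_other d _ _ _ _ his hit]
            simp [h1, h2]
        · by_cases hit : i = t
          · have hjs : j ≠ s := Ne.symm h1'
            have hjt : j ≠ t := fun hh => hij (hh ▸ hit)
            rw [Fin.sum_univ_four]
            simp only [vI, plane_other d _ _ _ _ hjs hjt]
            simp [h1, h1']
          · have his : i ≠ s := Ne.symm h1
            rw [Fin.sum_univ_four]
            simp only [vI, plane_other d _ _ _ _ his hit]
            simp [h1, h1']
    rw [Finset.sum_congr rfl fun p _ => hkey p]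
    rcases lt_or_gt_of_ne (show i ≠ j from hij) with hlt | hgt
    · rw [Finset.sum_eq_single_of_mem (⟨(i, j), hlt⟩ : PairIdx d) (Finset.mem_univ _)]
      · simp
      · rintro ⟨⟨s, t⟩, hst⟩ _ hne
        simp only
        split_ifs with hA hB
        · exact absurd (Subtype.ext (Prod.ext hA.1 hA.2)) hne
        · exact absurd (hB.1 ▸ hB.2 ▸ hst) (asymm hlt)
        · rfl
    · rw [Finset.sum_eq_single_of_mem (⟨(j, i), hgt⟩ : PairIdx d) (Finset.mem_univ _)]
      · simp [Ne.symm hij, hij]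
      · rintro ⟨⟨s, t⟩, hst⟩ _ hne
        simp only
        split_ifs with hA hB
        · exact absurd (hA.1 ▸ hA.2 ▸ hst) (asymm hgt)
        · exact absurd (Subtype.ext (Prod.ext hB.1 hB.2)) hne
        · rfl

lemma contDiff_cf (idx : I d) :
    ContDiff ℝ (⊤ : ℕ∞) (fun S : Fin d → Fin d → ℝ => cf d S idx) := by
  have hentry : ∀ a b : Fin d, ContDiff ℝ (⊤ : WithTop ℕ∞) (fun S : Fin d → Fin d → ℝ => S a b) := by
    intro a b
    exact (ContinuousLinearMap.proj b : (Fin d → ℝ) →L[ℝ] ℝ).contDiff.comp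
      ((ContinuousLinearMap.proj a : (Fin d → Fin d → ℝ) →L[ℝ] (Fin d → ℝ)).contDiff)
  have hcfr : ∀ q : PairIdx d × Fin 4,
      ContDiff ℝ (⊤ : WithTop ℕ∞) (fun S : Fin d → Fin d → ℝ => cfr d q S) := by
    intro q
    show ContDiff ℝ (⊤ : WithTop ℕ∞)
      (fun S : Fin d → Fin d → ℝ => K d + sgn q.2 * (25/48) * S q.1.1.1 q.1.1.2)
    exact contDiff_const.add (contDiff_const.mul (hentry _ _))
  cases idx with
  | inr q => exact (hcfr q).of_le le_top
  | inl k =>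
    show ContDiff ℝ ((⊤ : ℕ∞) : WithTop ℕ∞) (fun S : Fin d → Fin d → ℝ =>
      S k k - ∑ q : PairIdx d × Fin 4, cfr d q S * (vI d (.inr q) k)^2)
    exact ((hentry k k).sub (ContDiff.sum fun q _ => (hcfr q).mul contDiff_const)).of_le le_top

lemma entry_bound {S : Fin d → Fin d → ℝ}
    (h : dist S (fun i j => if i = j then (1:ℝ) else 0) ≤ eps d) :
    ∀ i j, |S i j - (if i = j then (1:ℝ) else 0)| ≤ eps d := by
  intro i j
  have h1 := dist_le_pi_dist S (fun i j => if i = j then (1:ℝ) else 0) i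
  have h2 := dist_le_pi_dist (S i) (fun j => if i = j then (1:ℝ) else 0) j
  rw [Real.dist_eq] at h2
  exact le_trans h2 (le_trans h1 h)

end GeomVel

open GeomVel

/-- **Geometric decomposition lemma for the velocity field (Lemma A.1).**
For every `d ≥ 2` there are finitely many rational unit vectors `ξ`, each extended to an
orthonormal basis `(ξ, ξ₁, …, ξ_{d-1})` of `ℝ^d` (encoded as `e ξ : Fin d → (Fin d → ℝ)`
with `e ξ 0 = ξ`), constants `ε₀ > 0` and `C ≥ 1`, and smooth functions `Γ_ξ` defined
near the identity in the space of symmetric matrices, such that every symmetric matrix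
`S` with `|S - Id| < ε₀` satisfies `S = ∑_ξ Γ_ξ(S)² ξ₁ ⊗ ξ₁`, and
`C⁻¹ ≤ Γ_ξ(S) ≤ C`. Matrices are encoded as `Fin d → Fin d → ℝ` with the sup norm. -/
theorem geometric_lemma_velocity (d : ℕ) (hd : 2 ≤ d) :
    ∃ (Λ : Finset (Fin d → ℝ)) (e : (Fin d → ℝ) → Fin d → (Fin d → ℝ))
      (ε₀ C : ℝ) (Γ : (Fin d → ℝ) → (Fin d → Fin d → ℝ) → ℝ),
      0 < ε₀ ∧ 1 ≤ C ∧
      -- the directions are rational unit vectors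
      (∀ ξ ∈ Λ, (∀ i, ∃ q : ℚ, ξ i = (q : ℝ)) ∧ ∑ i, ξ i ^ 2 = 1) ∧
      -- `(ξ, ξ₁, …, ξ_{d-1})` is an orthonormal basis of `ℝ^d` with first vector `ξ`
      (∀ ξ ∈ Λ, e ξ ⟨0, by omega⟩ = ξ ∧
        ∀ k l : Fin d, ∑ i, e ξ k i * e ξ l i = if k = l then (1 : ℝ) else 0) ∧
      -- each `Γ_ξ` is smooth on the ε₀-ball around the identity in the symmetric matrices
      (∀ ξ ∈ Λ, ContDiffOn ℝ (⊤ : ℕ∞) (Γ ξ)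
        {S : Fin d → Fin d → ℝ | (∀ i j, S i j = S j i) ∧
          dist S (fun i j => if i = j then (1 : ℝ) else 0) < ε₀}) ∧
      -- decomposition identity and two-sided bounds on that ball
      (∀ S : Fin d → Fin d → ℝ, (∀ i j, S i j = S j i) →
        dist S (fun i j => if i = j then (1 : ℝ) else 0) < ε₀ →
        (∀ i j, S i j =
          ∑ ξ ∈ Λ, (Γ ξ S) ^ 2 * (e ξ ⟨1, by omega⟩ i * e ξ ⟨1, by omega⟩ j)) ∧
        (∀ ξ ∈ Λ, C⁻¹ ≤ Γ ξ S ∧ Γ ξ S ≤ C)) := by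
  classical
  have hd2 : (2:ℝ) ≤ (d:ℝ) := by exact_mod_cast hd
  have hdpos : (0:ℝ) < d := by linarith
  have h0 : (0:ℕ) < d := by omega
  have h1 : (1:ℕ) < d := by omega
  refine ⟨Finset.univ.image (xiI d), eV d hd, eps d, 4*(d:ℝ), Gam d, ?_, ?_, ?_, ?_, ?_, ?_⟩
  · rw [eps]; positivity
  · linarith
  · rintro ξ hξ
    rw [Finset.mem_image] at hξ
    obtain ⟨idx, -, rfl⟩ := hξ
    refine ⟨?_, sum_sq_xi d idx⟩
    intro i
    cases idx with
    | inl k =>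
      exact ⟨if i = nxt d k then 1 else 0, by
        show std d (nxt d k) i = _
        simp [std]; split_ifs <;> simp⟩
    | inr q =>
      exact ⟨if i = q.1.1.1 then (px q.2).1 else if i = q.1.1.2 then (px q.2).2 else 0, by
        show plane d _ _ _ _ i = _
        simp [plane]; split_ifs <;> simp⟩
  · rintro ξ hξ
    rw [Finset.mem_image] at hξ
    obtain ⟨idx, -, rfl⟩ := hξ
    rw [eV_eq d hd]
    exact ⟨bas_zero d hd idx h0, bas_orth d hd idx⟩
  · rintro ξ hξ
    rw [Finset.mem_image] at hξ
    obtain ⟨idx, -, rfl⟩ := hξ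
    have hfun : Gam d (xiI d idx) = fun S => Real.sqrt (cf d S idx) :=
      funext fun S => Gam_eq d hd idx S
    rw [hfun]
    intro S₀ hS₀
    have hS : ∀ i j, |S₀ i j - (if i = j then (1:ℝ) else 0)| ≤ eps d :=
      entry_bound d (le_of_lt hS₀.2)
    have hpos : 0 < cf d S₀ idx := by
      have hlb := (cf_lb d hd hS idx).1
      have : (0:ℝ) < 1/(8*(d:ℝ)) := by positivity
      linarith
    exact ContDiffAt.comp_contDiffWithinAt (g := Real.sqrt) (f := fun S => cf d S idx)
      S₀ (Real.contDiffAt_sqrt (ne_of_gt hpos))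
      ((contDiff_cf d idx).contDiffAt.contDiffWithinAt)
  · intro S hsym hdist
    have hS : ∀ i j, |S i j - (if i = j then (1:ℝ) else 0)| ≤ eps d :=
      entry_bound d (le_of_lt hdist)
    have hinj : ∀ x ∈ Finset.univ, ∀ y ∈ Finset.univ, xiI d x = xiI d y → x = y :=
      fun x _ y _ h => xiI_inj d hd h
    constructor
    · intro i j
      rw [Finset.sum_image hinj]
      have hterm : ∀ idx : I d,
          Gam d (xiI d idx) S ^ 2 *
            (eV d hd (xiI d idx) ⟨1, h1⟩ i * eV d hd (xiI d idx) ⟨1, h1⟩ j)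
          = cf d S idx * (vI d idx i * vI d idx j) := by
        intro idx
        rw [Gam_eq d hd, eV_eq d hd, bas_one d hd idx h1,
          Real.sq_sqrt (by
            have hlb := (cf_lb d hd hS idx).1
            have : (0:ℝ) < 1/(8*(d:ℝ)) := by positivity
            linarith)]
      rw [Finset.sum_congr rfl fun idx _ => hterm idx, decomp d hsym i j]
    · rintro ξ hξ
      rw [Finset.mem_image] at hξ
      obtain ⟨idx, -, rfl⟩ := hξ
      rw [Gam_eq d hd]
      obtain ⟨hlb, hub⟩ := cf_lb d hd hS idx
      constructor
      · rw [show (4*(d:ℝ))⁻¹ = 1/(4*(d:ℝ)) by rw [one_div]]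
        rw [Real.le_sqrt (by positivity)]
        have : (1/(4*(d:ℝ)))^2 ≤ 1/(8*(d:ℝ)) := by
          rw [div_pow, one_pow, div_le_div_iff₀ (by positivity) (by positivity)]
          nlinarith
        linarith
        have hpos8 : (0:ℝ) < 1/(8*(d:ℝ)) := by positivity
        linarith
      · have h4 : Real.sqrt (cf d S idx) ≤ Real.sqrt 4 :=
          Real.sqrt_le_sqrt (by linarith)
        have : Real.sqrt 4 = 2 := by
          rw [show (4:ℝ) = 2^2 by norm_num, Real.sqrt_sq (by norm_num)]
        linarith
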